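/- The circular formula '(Switch1 = on ∧ Switch2 = on ∧ Lamp = on) is a cause of (Switch1 = on ∨ Switch2 = on ∨ Lamp = on)' holds in M^¬⊕lamp but fails in M^∧lamp (where AC3, minimality, is violated). -/
import Mathlib


/-- A causal model: structural equations `F` for endogenous variables `V`,
given a context (setting of exogenous variables) `u : U`.  Acyclicity is
enforced by an ordering `ord`: each equation may only depend on
strictly smaller variables. -/
structure CausalModel (U V Val : Type) where
  F : V → U → (V → Val) → Val
  ord : V → ℕ
  resp : ∀ v u a b, (∀ w, ord w < ord v → a w = b w) → F v u a = F v u b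

namespace CausalModel

variable {U V Val : Type}

/-- `s` is a compatible (consistent) assignment to the endogenous variables. -/
def Solves (M : CausalModel U V Val) (u : U) (s : V → Val) : Prop :=
  ∀ v, s v = M.F v u s

/-- Intervention: replace the equations of variables on which `g` is defined
by the corresponding constants. -/
def intervene (M : CausalModel U V Val) (g : V → Option Val) : CausalModel U V Val where
  F v u a := (g v).getD (M.F v u a)
  ord := M.ord
  resp := by
    intro v u a b h
    cases hg : g v <;> simp [Option.getD, hg, M.resp v u a b h]

end CausalModel

/-- Formulas: atoms `X = x`, negation, conjunction, and causal statements
`X⃗ = x⃗ ⇝ φ` (per the modified HP definition). -/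
inductive Form (V Val : Type) where
  | atom : V → Val → Form V Val
  | neg : Form V Val → Form V Val
  | conj : Form V Val → Form V Val → Form V Val
  | cause : List (V × Val) → Form V Val → Form V Val

namespace Form

variable {U V Val : Type}

def disj (φ ψ : Form V Val) : Form V Val := .neg (.conj (.neg φ) (.neg ψ))

variable [DecidableEq V]

mutual
/-- Satisfaction `(M,u) ⊨ φ`.  Since the model is acyclic, there is a
unique compatible assignment, over which we (harmlessly) quantify. -/
def holds (M : CausalModel U V Val) (u : U) : Form V Val → Prop
  | .atom X x => ∀ s, M.Solves u s → s X = x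
  | .neg φ => ¬ holds M u φ
  | .conj φ ψ => holds M u φ ∧ holds M u ψ
  | .cause XS φ =>
      -- AC1
      (holds M u φ ∧ ∀ s, M.Solves u s → ∀ p ∈ XS, s p.1 = p.2) ∧
      -- AC2
      AC2 M u XS φ ∧
      -- AC3 (minimality)
      (∀ XS', List.Sublist XS' XS → XS' ≠ XS → ¬ AC2 M u XS' φ)
termination_by φ => (sizeOf φ, 0)

/-- AC2: there are alternative values `x'` for the variables of `XS` and a
witness set `W` held at its actual values making `φ` false. -/
def AC2 (M : CausalModel U V Val) (u : U) (XS : List (V × Val)) (φ : Form V Val) : Prop :=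
  ∃ (x' : V → Val) (W : Finset V), ∀ s, M.Solves u s →
    ¬ holds (M.intervene (fun v =>
        if v ∈ XS.map Prod.fst then some (x' v)
        else if v ∈ W then some (s v) else none)) u φ
termination_by (sizeOf φ, 1)
end

/-- Variables occurring in a formula. -/
def vars : Form V Val → Finset V
  | .atom X _ => {X}
  | .neg φ => vars φ
  | .conj φ ψ => vars φ ∪ vars ψ
  | .cause XS φ => (XS.map Prod.fst).toFinset ∪ vars φ

/-- Simple formulas: Boolean combinations of atoms. -/
def Simple : Form V Val → Prop
  | .atom _ _ => True
  | .neg φ => Simple φ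
  | .conj φ ψ => Simple φ ∧ Simple ψ
  | .cause _ _ => False

end Form

/-- `M^∧lamp`: variables Switch1 = 0, Switch2 = 1, Lamp = 2; single context;
both switches are on (`true`); the lamp is on iff both switches are on. -/
def Mand : CausalModel Unit (Fin 3) Bool where
  F v _ a :=
    match v with
    | 0 => true
    | 1 => true
    | 2 => a 0 && a 1
  ord v := v.val
  resp := by
    intro v u a b h
    fin_cases v
    · rfl
    · rfl
    · show (a 0 && a 1) = (b 0 && b 1)
      rw [h 0 (by norm_num), h 1 (by norm_num)]

/-- `M^¬⊕lamp`: as `Mand`, but the lamp is on iff the switches agree. -/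
def Mxor : CausalModel Unit (Fin 3) Bool where
  F v _ a :=
    match v with
    | 0 => true
    | 1 => true
    | 2 => a 0 == a 1
  ord v := v.val
  resp := by
    intro v u a b h
    fin_cases v
    · rfl
    · rfl
    · show (a 0 == a 1) = (b 0 == b 1)
      rw [h 0 (by norm_num), h 1 (by norm_num)]

section Aux

abbrev phi : Form (Fin 3) Bool :=
  Form.disj (.atom 0 true) (Form.disj (.atom 1 true) (.atom 2 true))

lemma holds_phi_iff (M : CausalModel Unit (Fin 3) Bool) :
    Form.holds M () phi ↔
      ((∀ s, M.Solves () s → s 0 = true) ∨ (∀ s, M.Solves () s → s 1 = true) ∨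
       (∀ s, M.Solves () s → s 2 = true)) := by
  simp only [phi, Form.disj, Form.holds]
  tauto

lemma not_holds_phi (M : CausalModel Unit (Fin 3) Bool)
    (h0 : ∃ s, M.Solves () s ∧ s 0 = false)
    (h1 : ∃ s, M.Solves () s ∧ s 1 = false)
    (h2 : ∃ s, M.Solves () s ∧ s 2 = false) :
    ¬ Form.holds M () phi := by
  rw [holds_phi_iff]
  rintro (h | h | h)
  · obtain ⟨s, hs, hf⟩ := h0; rw [h s hs] at hf; exact absurd hf (by decide)
  · obtain ⟨s, hs, hf⟩ := h1; rw [h s hs] at hf; exact absurd hf (by decide)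
  · obtain ⟨s, hs, hf⟩ := h2; rw [h s hs] at hf; exact absurd hf (by decide)

lemma solves_mxor {s : Fin 3 → Bool} (hs : Mxor.Solves () s) :
    s 0 = true ∧ s 1 = true ∧ s 2 = true := by
  have h0 := hs 0
  have h1 := hs 1
  have h2 := hs 2
  simp [Mxor] at h0 h1 h2
  refine ⟨h0, h1, ?_⟩
  rw [h2, h0, h1]; rfl

lemma solves_mxor_top : Mxor.Solves () (fun _ => true) := by
  intro v
  fin_cases v <;> simp [Mxor]

end Aux

/-- The circular formula
`(Switch1 = on ∧ Switch2 = on ∧ Lamp = on) ⇝ (Switch1 = on ∨ Switch2 = on ∨ Lamp = on)`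
holds in `M^¬⊕lamp` but fails in `M^∧lamp`, where AC3 (minimality) is
violated: a strict subset of the candidate cause already satisfies AC2. -/
theorem stmt6 :
    Form.holds Mxor () (.cause [(0, true), (1, true), (2, true)] (Form.disj (.atom 0 true) (Form.disj (.atom 1 true) (.atom 2 true)))) ∧
    ¬ Form.holds Mand () (.cause [(0, true), (1, true), (2, true)] (Form.disj (.atom 0 true) (Form.disj (.atom 1 true) (.atom 2 true)))) ∧
    ∃ XS' : List (Fin 3 × Bool), List.Sublist XS' [(0, true), (1, true), (2, true)] ∧
      XS' ≠ [(0, true), (1, true), (2, true)] ∧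
      Form.AC2 Mand () XS' (Form.disj (.atom 0 true) (Form.disj (.atom 1 true) (.atom 2 true))) := by
  have hac2 : Form.AC2 Mand () [(0, true), (1, true)] phi := by
    rw [Form.AC2]
    refine ⟨fun _ => false, ∅, fun s hs => ?_⟩
    apply not_holds_phi
    all_goals
      refine ⟨fun _ => false, fun v => ?_, rfl⟩
      fin_cases v <;> simp [CausalModel.intervene, Mand]
  have hsub : List.Sublist [(0, true), (1, true)]
      [((0 : Fin 3), true), (1, true), (2, true)] := by
    exact .cons₂ _ (.cons₂ _ (.cons _ (.slnil)))
  have hne : [((0 : Fin 3), true), (1, true)] ≠ [(0, true), (1, true), (2, true)] := by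
    simp
  refine ⟨?_, ?_, [(0, true), (1, true)], hsub, hne, hac2⟩
  · -- holds in Mxor
    rw [Form.holds]
    refine ⟨⟨?_, ?_⟩, ?_, ?_⟩
    · -- AC1: phi holds
      rw [holds_phi_iff]
      exact Or.inl (fun s hs => (solves_mxor hs).1)
    · -- AC1: actual values
      intro s hs p hp
      obtain ⟨h0, h1, h2⟩ := solves_mxor hs
      fin_cases hp <;> assumption
    · -- AC2
      rw [Form.AC2]
      refine ⟨fun _ => false, ∅, fun s hs => ?_⟩
      apply not_holds_phi
      all_goals
        refine ⟨fun _ => false, fun v => ?_, rfl⟩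
        fin_cases v <;> simp [CausalModel.intervene, Mxor]
    · -- AC3
      intro XS' hsub' hne' hAC2
      rw [Form.AC2] at hAC2
      obtain ⟨x', W, hW⟩ := hAC2
      apply hW (fun _ => true) solves_mxor_top
      rw [holds_phi_iff]
      have hmem : XS' ∈ ([((0:Fin 3), true), (1, true), (2, true)]).sublists :=
        List.mem_sublists.2 hsub'
      fin_cases hmem
      · -- []
        left; intro s hs
        have h := hs 0
        by_cases hw : (0 : Fin 3) ∈ W <;>
          simpa [CausalModel.intervene, Mxor, hw] using h
      · -- [(0,t)]
        right; left; intro s hs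
        have h := hs 1
        by_cases hw : (1 : Fin 3) ∈ W <;>
          simpa [CausalModel.intervene, Mxor, hw] using h
      · -- [(1,t)]
        left; intro s hs
        have h := hs 0
        by_cases hw : (0 : Fin 3) ∈ W <;>
          simpa [CausalModel.intervene, Mxor, hw] using h
      · -- [(0,t),(1,t)]
        rcases hx0 : x' 0 with _ | _
        · rcases hx1 : x' 1 with _ | _
          · -- both false: lamp is true
            right; right; intro s hs
            have h0 := hs 0
            have h1 := hs 1
            have h2 := hs 2
            simp [CausalModel.intervene, Mxor, hx0, hx1] at h0 h1
            by_cases hw : (2 : Fin 3) ∈ W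
            · simpa [CausalModel.intervene, Mxor, hw] using h2
            · simp [CausalModel.intervene, Mxor, hw] at h2
              rw [h2, h0, h1]; rfl
          · right; left; intro s hs
            have h := hs 1
            simpa [CausalModel.intervene, Mxor, hx1] using h
        · left; intro s hs
          have h := hs 0
          simpa [CausalModel.intervene, Mxor, hx0] using h
      · -- [(2,t)]
        left; intro s hs
        have h := hs 0
        by_cases hw : (0 : Fin 3) ∈ W <;>
          simpa [CausalModel.intervene, Mxor, hw] using h
      · -- [(0,t),(2,t)]
        right; left; intro s hs
        have h := hs 1
        by_cases hw : (1 : Fin 3) ∈ W <;>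
          simpa [CausalModel.intervene, Mxor, hw] using h
      · -- [(1,t),(2,t)]
        left; intro s hs
        have h := hs 0
        by_cases hw : (0 : Fin 3) ∈ W <;>
          simpa [CausalModel.intervene, Mxor, hw] using h
      · -- full: contradiction
        exact absurd rfl hne'
  · -- fails in Mand: AC3 violated
    rw [Form.holds]
    rintro ⟨-, -, h3⟩
    exact h3 _ hsub hne hac2
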